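/- For every Turing machine M accepting coBHP there exists a pair ⟨N',x'⟩ ∈ coHP such that for all t, the running time of M on input ⟨N',x',1^t⟩ is at least t. -/

import Mathlib

/-
If `T_M(⟨N,x,1^t⟩) < t` for some `t` at every `⟨N,x⟩ ∈ coHP`, then coHP would be computably
enumerable: `⟨N,x⟩ ∈ coHP` iff `M` accepts some `⟨N,x,1^t⟩` within fewer than `t` steps.
Indeed, such a fast run has not read all of the padding, so `M` also accepts `⟨N,x,1^s⟩`
for every `s ≥ t`; hence `N` has no accepting path on `x` of any length. This contradicts
the unsolvability of the halting problem.
-/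

open Nat.Partrec (Code)

/-- Inputs `⟨N, x, 1^t⟩`: a machine code `N`, an input `x`, and a padding length `t`. -/
abbrev Input : Type := (Code × ℕ) × ℕ

/-- `BHP`: the bounded halting problem, triples `⟨N,x,1^t⟩` such that `N` has an
accepting computation on `x` within `t` steps. -/
def BHP : Set Input := {p | (Nat.Partrec.Code.evaln p.2 p.1.1 p.1.2).isSome}

/-- `coBHP`: the complement of the bounded halting problem. -/
def coBHP : Set Input := BHPᶜ

/-- `HP`: the halting problem. -/
def HP : Set (Code × ℕ) := {p | (p.1.eval p.2).Dom}

/-- `coHP`: the complement of the halting problem. -/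
def coHP : Set (Code × ℕ) := HPᶜ

/-- An abstract (deterministic) Turing machine: an acceptance predicate on
inputs together with a running-time function `time` (T_M). -/
structure Machine (α : Type) where
  accepts : α → Prop
  time : α → ℕ

/-- `M` accepts exactly the language `L`. -/
def Accepts {α : Type} (M : Machine α) (L : Set α) : Prop :=
  ∀ w, M.accepts w ↔ w ∈ L

theorem REPred.comp {α β : Type*} [Primcodable α] [Primcodable β] {p : β → Prop}
    (hp : REPred p) {f : α → β} (hf : Computable f) : REPred fun a => p (f a) :=
  Partrec.comp hp hf

theorem ComputablePred.rePred_exists_nat {α : Type*} [Primcodable α] {p : α × ℕ → Prop}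
    (hp : ComputablePred p) : REPred fun a => ∃ n, p (a, n) := by
  classical
  have hsearch : Partrec fun a => Nat.rfind fun n => Part.some (decide (p (a, n))) :=
    Partrec.rfind hp.decide.partrec
  exact hsearch.dom_re.of_eq fun a => Nat.rfind_dom.trans (by simp)

theorem coHP_not_rePred : ¬REPred (· ∈ coHP) := fun h =>
  ComputablePred.halting_problem_not_re 0 (h.comp (Computable.id.pair (Computable.const 0)))

theorem mem_BHP_of_le {p : Code × ℕ} {s t : ℕ} (hs : (p, s) ∈ BHP) (hst : s ≤ t) :
    (p, t) ∈ BHP := by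
  obtain ⟨a, ha⟩ := Option.isSome_iff_exists.1 hs
  exact Option.isSome_iff_exists.2 ⟨a, Code.evaln_mono hst ha⟩

theorem mem_HP_iff_exists_mem_BHP {p : Code × ℕ} : p ∈ HP ↔ ∃ t, (p, t) ∈ BHP := by
  simp only [HP, BHP, Set.mem_ofPred_eq, Part.dom_iff_mem, Code.evaln_complete,
    Option.isSome_iff_exists]
  exact exists_comm

theorem mem_coBHP_of_mem_coHP {p : Code × ℕ} (hp : p ∈ coHP) (t : ℕ) : (p, t) ∈ coBHP :=
  fun ht => hp (mem_HP_iff_exists_mem_BHP.2 ⟨t, ht⟩)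

theorem mem_coHP_of_forall_le_mem_coBHP {p : Code × ℕ} {t : ℕ}
    (h : ∀ s, t ≤ s → (p, s) ∈ coBHP) : p ∈ coHP := fun hp =>
  let ⟨k, hk⟩ := mem_HP_iff_exists_mem_BHP.1 hp
  h (max k t) (le_max_right k t) (mem_BHP_of_le hk (le_max_left k t))

/-- For every Turing machine `M` accepting `coBHP` (where, effectively, one can
decide whether `M` accepts within fewer steps than its padding, `hComp`, and `M`
is a one-tape machine whose behavior stabilizes once it halts without reading all
the padding, `hStab`), there exists a pair `⟨N',x'⟩ ∈ coHP` such that for all `t`,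
the running time of `M` on input `⟨N',x',1^t⟩` is at least `t`. -/
theorem exists_hard_instance (M : Machine Input)
    (hAcc : Accepts M coBHP)
    (hComp : ComputablePred fun w : Input => M.accepts w ∧ M.time w < w.2)
    (hStab : ∀ (N : Code) (x t₀ t : ℕ), M.time ((N, x), t₀) < t₀ → t₀ ≤ t →
      ((M.accepts ((N, x), t) ↔ M.accepts ((N, x), t₀)) ∧
        M.time ((N, x), t) < t₀)) :
    ∃ q ∈ coHP, ∀ t, t ≤ M.time (q, t) := by
  by_contra! hfast
  refine coHP_not_rePred (hComp.rePred_exists_nat.of_eq fun q => ⟨?_, fun hq => ?_⟩)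
  · rintro ⟨t, hacc, htime⟩
    exact mem_coHP_of_forall_le_mem_coBHP fun s hs =>
      (hAcc _).1 ((hStab q.1 q.2 t s htime hs).1.2 hacc)
  · obtain ⟨t, htime⟩ := hfast q hq
    exact ⟨t, (hAcc _).2 (mem_coBHP_of_mem_coHP hq t), htime⟩
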